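/- arXiv:1912.04653 — 2 statements merged into one kernel-verified Lean document; each statement's English description precedes it below -/
import Mathlib

section
/- Let p be an odd prime, let n > 1 be an integer, let F_q be the finite field with q = p^n elements, and let γ ∈ F_q \ {1}. Then #{ i ∈ ℤ : 1 ≤ i ≤ q−2 and γ^{i+1} = i(1−γ) + 1 } ≤ q/p + √(3p/2 − 39/16) + 1/4 (as an inequality of real numbers). -/
/-!
Write `d` for the order of `γ ≠ 0`. The condition `γ ^ (i + 1) = i (1 - γ) + 1` only depends on
`i mod d p`, and a solution `i < d p` is determined by `i mod p` (which fixes the right-hand side,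
hence `γ ^ (i + 1)`, hence `i mod d`) as well as by `i mod d`.

If `γ ^ p = γ`, then `d ∣ p - 1`, so `[0, q - 1)` consists of `(q - p) / (d p)` full periods, each
holding at most `d` solutions, followed by a copy of `[0, p - 1)`. The solutions in `[0, p)` have
pairwise distinct differences, and a Sidon set in `[0, p)` has at most about `√(3p/2)` elements.

Otherwise Frobenius shows that the `T ≤ p` solutions in one period have pairwise distinct
differences modulo `d`, so `T (T - 1) < d`, and the `⌈(q - 1) / (d p)⌉` periods hold at most
`q / p + 1` solutions. For `γ = 0` the solutions are the `i ≡ -1 mod p`.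
-/

open Finset Function

namespace Nat

variable {P : ℕ → Prop} [DecidablePred P] {m : ℕ}

theorem count_mul_add_of_periodic (hP : Periodic P m) (k r : ℕ) :
    count P (k * m + r) = k * count P m + count P r := by
  induction k with
  | zero => simp
  | succ k ih =>
    have hshift : (fun j ↦ P (m + j)) = P := funext fun j ↦ by rw [add_comm, hP j]
    rw [show (k + 1) * m + r = m + (k * m + r) by ring, count_add]
    simp only [hshift, ih]
    ring

theorem count_le_of_modEq_imp_eq {k : ℕ} (hk : 0 < k)
    (h : ∀ i < m, ∀ j < m, P i → P j → i ≡ j [MOD k] → i = j) : count P m ≤ k := by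
  rw [count_eq_card_filter_range, ← card_range k]
  refine card_le_card_of_injOn (· % k) (fun i _ ↦ mem_range.2 (mod_lt i hk)) ?_
  intro i hi j hj hij
  simp only [coe_filter, mem_range, Set.mem_ofPred_eq] at hi hj
  exact h i hi.1 j hj.1 hi.2 hj.2 hij

theorem ncard_Icc_filter_eq_count (h0 : ¬P 0) (N : ℕ) :
    {i | 1 ≤ i ∧ i ≤ N - 2 ∧ P i}.ncard = count P (N - 1) := by
  rw [count_eq_card_filter_range, ← Set.ncard_coe_finset]
  congr 1
  ext i
  simp only [coe_filter, mem_range, Set.mem_ofPred_eq]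
  constructor
  · rintro ⟨hi₁, hi, hPi⟩
    exact ⟨by omega, hPi⟩
  · rintro ⟨hi, hPi⟩
    exact ⟨one_le_iff_ne_zero.2 (by rintro rfl; exact h0 hPi), by omega, hPi⟩

theorem div_add_one_mul_le {T R d : ℕ} (hTd : T * (T - 1) < d) (hTR : T ≤ R + 1) :
    (R / d + 1) * T ≤ R + 2 := by
  have hdx : d * (R / d) ≤ R := mul_div_le R d
  rcases lt_or_ge T 2 with hT | hT
  · have := div_le_self R d
    interval_cases T <;> omega
  · obtain ⟨t, rfl⟩ : ∃ t, T = t + 1 := ⟨T - 1, by omega⟩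
    simp only [Nat.add_sub_cancel] at hTd
    have hx : (t + 1) * t * (R / d) ≤ R := le_trans (mul_le_mul_right _ hTd.le) hdx
    nlinarith

end Nat

theorem Finset.card_mul_card_add_one_le_two_mul_sum {E : Finset ℤ} (hE : ∀ x ∈ E, 1 ≤ x) :
    (#E : ℤ) * (#E + 1) ≤ 2 * ∑ x ∈ E, x := by
  have gauss : ∀ k : ℕ, 2 * ∑ n ∈ range k, (1 + (n : ℤ)) = k * (k + 1) := by
    intro k
    induction k with
    | zero => simp
    | succ k ih => rw [sum_range_succ, mul_add, ih]; push_cast; ring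
  rw [← gauss]
  exact mul_le_mul_of_nonneg_left (sum_range_le_sum hE) zero_le_two

/-- The `2s - 3` gaps `a (j + 1) - a j` and `a (j + 2) - a j` are distinct positive integers, and
their sum telescopes to at most `3N`. -/
theorem StrictMonoOn.sidon_bound {a : ℕ → ℤ} {s N : ℕ} (ha : StrictMonoOn a (Set.Iio s))
    (ha_nonneg : ∀ j < s, 0 ≤ a j) (ha_le : ∀ j < s, a j ≤ N)
    (hdiff : ∀ i j i' j', i < j → j < s → i' < j' → j' < s → a j - a i = a j' - a i' → i = i')
    (hs : 2 ≤ s) : (2 * s - 3 : ℤ) * (s - 1) ≤ 3 * N := by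
  have hlt : ∀ i j, i < j → j < s → a i < a j := fun i j hij hj ↦
    ha (Set.mem_Iio.2 (hij.trans hj)) (Set.mem_Iio.2 hj) hij
  set gaps : ℕ → Finset ℤ := fun k ↦ (range (s - k)).image fun j ↦ a (j + k) - a j
  have hinj : ∀ k, 0 < k → Set.InjOn (fun j ↦ a (j + k) - a j) (range (s - k)) :=
    fun k hk i hi j hj h ↦ by
      simp only [coe_range, Set.mem_Iio] at hi hj
      exact hdiff _ _ _ _ (by omega) (by omega) (by omega) (by omega) h
  have hgaps_pos : ∀ k, 0 < k → ∀ x ∈ gaps k, 1 ≤ x := fun k hk x hx ↦ by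
    obtain ⟨j, hj, rfl⟩ := mem_image.1 hx
    have := hlt j (j + k) (by omega) (by simp at hj; omega)
    omega
  have hdisj : Disjoint (gaps 1) (gaps 2) := by
    simp only [gaps, disjoint_left, mem_image, mem_range, not_exists, not_and]
    rintro _ ⟨i, hi, rfl⟩ j hj h
    obtain rfl : i = j := hdiff _ _ _ _ (by omega) (by omega) (by omega) (by omega) h.symm
    have := hlt (i + 1) (i + 2) (by omega) (by omega)
    omega
  have hsum₁ : ∑ x ∈ gaps 1, x = a (s - 1) - a 0 := by
    rw [sum_image (hinj 1 one_pos), sum_range_sub a]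
  have hsum₂ : ∑ x ∈ gaps 2, x = (a (s - 1) + a (s - 2)) - (a 1 + a 0) := by
    have := sum_range_sub (fun j ↦ a j + a (j + 1)) (s - 2)
    have hterm : ∀ j, a (j + 1) + a (j + 1 + 1) - (a j + a (j + 1)) = a (j + 2) - a j :=
      fun j ↦ by ring
    rw [show s - 2 + 1 = s - 1 by omega, zero_add, sum_congr rfl fun j _ ↦ hterm j] at this
    rw [sum_image (hinj 2 two_pos), this]
    ring
  have hE := card_mul_card_add_one_le_two_mul_sum fun x hx ↦
    (mem_union.1 hx).elim (hgaps_pos 1 one_pos x) (hgaps_pos 2 two_pos x)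
  rw [card_union_of_disjoint hdisj, sum_union hdisj, card_image_of_injOn (hinj 1 one_pos),
    card_image_of_injOn (hinj 2 two_pos), card_range, card_range, hsum₁, hsum₂] at hE
  push_cast [hs, show 1 ≤ s by omega] at hE
  nlinarith [ha_le (s - 1) (by omega), ha_le (s - 2) (by omega), ha_nonneg 0 (by omega),
    ha_nonneg 1 (by omega)]

theorem Finset.sidon_card_bound {S : Finset ℕ} {N : ℕ} (hN : ∀ a ∈ S, a ≤ N)
    (hS : ∀ a ∈ S, ∀ b ∈ S, ∀ c ∈ S, ∀ d ∈ S, a < b → c < d → b - a = d - c → a = c)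
    (hs : 2 ≤ #S) : (2 * #S - 3 : ℤ) * (#S - 1) ≤ 3 * N := by
  have hfin : (Set.ofPred (· ∈ S)).Finite := S.finite_toSet
  have hcard : #hfin.toFinset = #S := congrArg card S.finite_toSet_toFinset
  have hmem : ∀ j < #S, Nat.nth (· ∈ S) j ∈ S := fun j hj ↦
    Nat.nth_mem_of_lt_card hfin (hcard ▸ hj)
  have hmono : StrictMonoOn (Nat.nth (· ∈ S)) (Set.Iio #S) := hcard ▸ Nat.nth_strictMonoOn hfin
  refine StrictMonoOn.sidon_bound (a := fun j ↦ (Nat.nth (· ∈ S) j : ℤ))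
    (fun i hi j hj h ↦ Nat.cast_lt.2 (hmono hi hj h)) (fun _ _ ↦ Nat.cast_nonneg _)
    (fun j hj ↦ by exact_mod_cast hN _ (hmem j hj)) ?_ hs
  intro i j i' j' hij hj hij' hj' h
  have hlt := hmono (Set.mem_Iio.2 (hij.trans hj)) (Set.mem_Iio.2 hj) hij
  have hlt' := hmono (Set.mem_Iio.2 (hij'.trans hj')) (Set.mem_Iio.2 hj') hij'
  exact hmono.injOn (Set.mem_Iio.2 (hij.trans hj)) (Set.mem_Iio.2 (hij'.trans hj')) <|
    hS _ (hmem i (hij.trans hj)) _ (hmem j hj) _ (hmem i' (hij'.trans hj')) _ (hmem j' hj')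
      hlt hlt' (by omega)

theorem Finset.card_mul_card_sub_one_lt_of_modEq {A : Finset ℕ} {d : ℕ} (hd : 0 < d)
    (h : ∀ v ∈ A, ∀ w ∈ A, ∀ v' ∈ A, ∀ w' ∈ A, v ≠ w → v + w' ≡ v' + w [MOD d] →
      v = v' ∧ w = w') :
    #A * (#A - 1) < d := by
  have : NeZero d := ⟨hd.ne'⟩
  have hdiff : ∀ v w v' w' : ℕ, (v : ZMod d) - w = v' - w' → v + w' ≡ v' + w [MOD d] := by
    intro v w v' w' hvw
    rw [← ZMod.natCast_eq_natCast_iff]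
    push_cast
    linear_combination hvw
  have hle : #A.offDiag ≤ #((univ : Finset (ZMod d)).erase 0) := by
    refine card_le_card_of_injOn (fun x ↦ (x.1 : ZMod d) - x.2) ?_ ?_
    · rintro ⟨v, w⟩ hvw
      obtain ⟨hv, hw, hne⟩ := mem_offDiag.1 (mem_coe.1 hvw)
      refine mem_coe.2 (mem_erase.2 ⟨fun h0 ↦ hne ?_, mem_univ _⟩)
      exact (h v hv w hw w hw w hw hne (hdiff v w w w (by rw [sub_self]; exact h0))).1
    · rintro ⟨v, w⟩ hvw ⟨v', w'⟩ hvw' heq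
      rw [mem_coe, mem_offDiag] at hvw hvw'
      obtain ⟨rfl, rfl⟩ := h v hvw.1 w hvw.2.1 v' hvw'.1 w' hvw'.2.1 hvw.2.2 (hdiff _ _ _ _ heq)
      rfl
  rw [offDiag_card, card_erase_of_mem (mem_univ _), card_univ, ZMod.card, ← Nat.mul_sub_one] at hle
  omega

namespace FiniteField

variable {K : Type*} [Field K] [Fintype K] {γ : K}

theorem isOfFinOrder (hγ : γ ≠ 0) : IsOfFinOrder γ :=
  isOfFinOrder_iff_pow_eq_one.2
    ⟨_, Nat.sub_pos_of_lt Fintype.one_lt_card, pow_card_sub_one_eq_one γ hγ⟩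

theorem orderOf_coprime_charP {p : ℕ} [Fact p.Prime] [CharP K p] (hγ : γ ≠ 0) :
    (orderOf γ).Coprime p := by
  have hp : p.Prime := Fact.out
  have hpq : p ∣ Fintype.card K := (CharP.cast_eq_zero_iff K p _).1 (Nat.cast_card_eq_zero K)
  refine Nat.Coprime.coprime_dvd_left (orderOf_dvd_of_pow_eq_one (pow_card_sub_one_eq_one γ hγ)) ?_
  rw [Nat.coprime_comm, hp.coprime_iff_not_dvd]
  intro h
  have := Nat.dvd_sub hpq h
  rw [Nat.sub_sub_self Fintype.card_pos] at this
  exact hp.one_lt.ne' (Nat.dvd_one.1 this)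

end FiniteField

section

variable {F : Type*} [Field F]

def ExpEqLinear (γ : F) (i : ℕ) : Prop := γ ^ (i + 1) = (i : F) * (1 - γ) + 1

namespace ExpEqLinear

variable {γ : F} {i j : ℕ}

theorem not_zero (hγ : γ ≠ 1) : ¬ExpEqLinear γ 0 := by
  simpa [ExpEqLinear] using hγ

theorem modEq_orderOf_of_cast_eq (hγ : IsOfFinOrder γ) (hi : ExpEqLinear γ i)
    (hj : ExpEqLinear γ j) (h : (i : F) = j) : i ≡ j [MOD orderOf γ] := by
  have hpow : γ ^ (i + 1) = γ ^ (j + 1) := by rw [hi, hj, h]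
  exact Nat.ModEq.add_right_cancel' 1 (hγ.pow_eq_pow_iff_modEq.1 hpow)

theorem cast_eq_of_modEq_orderOf (hγ : γ ≠ 1) (hi : ExpEqLinear γ i) (hj : ExpEqLinear γ j)
    (h : i ≡ j [MOD orderOf γ]) : (i : F) = j := by
  have hpow : γ ^ (i + 1) = γ ^ (j + 1) :=
    pow_eq_pow_of_modEq (h.add_right 1) (pow_orderOf_eq_one γ)
  rw [hi, hj, add_left_inj] at hpow
  exact mul_right_cancel₀ (sub_ne_zero.2 hγ.symm) hpow

variable {p : ℕ} [CharP F p]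

theorem zero_iff : ExpEqLinear (0 : F) i ↔ p ∣ i + 1 := by
  rw [← CharP.cast_eq_zero_iff F p, ExpEqLinear, zero_pow i.succ_ne_zero, eq_comm]
  push_cast
  simp

theorem count_zero [DecidablePred (ExpEqLinear (0 : F))] (N : ℕ) :
    Nat.count (ExpEqLinear (0 : F)) N = N / p := by
  rw [Nat.count_eq_card_filter_range, filter_congr fun i _ ↦ zero_iff, Nat.card_multiples]

theorem periodic : Periodic (ExpEqLinear γ) (orderOf γ * p) := by
  intro i
  simp only [ExpEqLinear, eq_iff_iff]
  rw [add_right_comm, pow_add, pow_mul, pow_orderOf_eq_one, one_pow, mul_one]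
  push_cast
  rw [CharP.cast_eq_zero F p, mul_zero, add_zero]

theorem eq_of_sub_eq {a b c d : ℕ} (hγ : γ ≠ 1) (ha : ExpEqLinear γ a) (hb : ExpEqLinear γ b)
    (hc : ExpEqLinear γ c) (hd : ExpEqLinear γ d) (hbp : b < p) (hdp : d < p) (hab : a < b)
    (hcd : c < d) (h : b - a = d - c) : a = c := by
  obtain ⟨δ, rfl⟩ : ∃ δ, b = a + δ := ⟨b - a, by omega⟩
  obtain rfl : d = c + δ := by omega
  have hβ : 1 - γ ≠ 0 := sub_ne_zero.2 hγ.symm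
  have step : ∀ x, ExpEqLinear γ x → ExpEqLinear γ (x + δ) →
      ((x : F) * (1 - γ) + 1) * (γ ^ δ - 1) = δ * (1 - γ) := by
    intro x hx hxδ
    rw [ExpEqLinear] at hx hxδ
    calc ((x : F) * (1 - γ) + 1) * (γ ^ δ - 1) = γ ^ (x + δ + 1) - γ ^ (x + 1) := by
          rw [← hx]; ring
      _ = δ * (1 - γ) := by rw [hxδ, hx]; push_cast; ring
  have hγδ : γ ^ δ ≠ 1 := by
    intro h1
    have := step a ha hb
    rw [h1, sub_self, mul_zero, eq_comm, mul_eq_zero, CharP.cast_eq_zero_iff F p] at this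
    exact this.elim (fun h ↦ absurd (Nat.le_of_dvd (by omega) h) (by omega)) hβ
  have hac : (a : F) = c := by
    have := (step a ha hb).trans (step c hc hd).symm
    rwa [mul_left_inj' (sub_ne_zero.2 hγδ), add_left_inj, mul_left_inj' hβ] at this
  exact ((CharP.natCast_eq_natCast F p).1 hac).eq_of_lt_of_lt (by omega) (by omega)

theorem count_prime_le [DecidablePred (ExpEqLinear γ)] (hγ : γ ≠ 1) :
    (Nat.count (ExpEqLinear γ) p : ℝ) ≤ 9 / 4 + √(3 * p / 2 - 39 / 16) := by
  rw [Nat.count_eq_card_filter_range]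
  set S := (range p).filter (ExpEqLinear γ)
  rcases Nat.lt_or_ge #S 3 with hs | hs
  · have : (#S : ℝ) ≤ 2 := by exact_mod_cast (by omega : #S ≤ 2)
    linarith [Real.sqrt_nonneg (3 * p / 2 - 39 / 16)]
  have hSp : ∀ a ∈ S, a < p := fun a ha ↦ mem_range.1 (mem_filter.1 ha).1
  have hp : 3 ≤ p := hs.trans (card_le_card (filter_subset _ _) |>.trans (card_range p).le)
  have hsidon := sidon_card_bound (N := p - 1) (fun a ha ↦ Nat.le_sub_one_of_lt (hSp a ha))
    (fun a ha b hb c hc d hd hab hcd h ↦ eq_of_sub_eq hγ (mem_filter.1 ha).2 (mem_filter.1 hb).2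
      (mem_filter.1 hc).2 (mem_filter.1 hd).2 (hSp b hb) (hSp d hd) hab hcd h) (by omega)
  have hsidonR : (2 * (#S : ℝ) - 3) * (#S - 1) ≤ 3 * (p - 1) := by
    push_cast [Nat.cast_sub (by omega : 1 ≤ p)] at hsidon
    exact_mod_cast hsidon
  have hsR : (3 : ℝ) ≤ #S := by exact_mod_cast hs
  have := (Real.le_sqrt' (y := 3 * p / 2 - 39 / 16) (by linarith : (0 : ℝ) < #S - 9 / 4)).2
    (by nlinarith)
  linarith

variable [Fact p.Prime]

theorem sub_one_of_pow_eq_self (hγp : γ ^ p = γ) : ExpEqLinear γ (p - 1) := by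
  have hp := (Fact.out : p.Prime).one_le
  rw [ExpEqLinear, Nat.sub_add_cancel hp, hγp, Nat.cast_sub hp, CharP.cast_eq_zero F p]
  ring

theorem cast_eq_or_cast_eq_of_add_modEq {v w v' w' : ℕ} (hγp : γ ^ p ≠ γ)
    (hv : ExpEqLinear γ v) (hw : ExpEqLinear γ w) (hv' : ExpEqLinear γ v')
    (hw' : ExpEqLinear γ w') (h : v + w' ≡ v' + w [MOD orderOf γ]) :
    ((v : F) = v' ∧ (w : F) = w') ∨ (v : F) = w := by
  have hβ : 1 - γ ≠ 0 := by
    rintro hβ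
    obtain rfl : γ = 1 := (sub_eq_zero.1 hβ).symm
    exact hγp (one_pow p)
  have hprod : ((v : F) * (1 - γ) + 1) * ((w' : F) * (1 - γ) + 1) =
      ((v' : F) * (1 - γ) + 1) * ((w : F) * (1 - γ) + 1) := by
    rw [← hv, ← hw', ← hv', ← hw, ← pow_add, ← pow_add]
    refine pow_eq_pow_of_modEq ?_ (pow_orderOf_eq_one γ)
    convert h.add_right 2 using 1 <;> ring
  -- `A` and `B` lie in the prime field, so Frobenius turns `A (1 - γ) + B = 0` into
  -- `A (1 - γ ^ p) + B = 0`; as `γ ^ p ≠ γ`, this forces `A = B = 0`.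
  set A : F := v * w' - v' * w
  set B : F := v + w' - (v' + w)
  have hlin : A * (1 - γ) + B = 0 := mul_right_cancel₀ hβ (by linear_combination hprod)
  have hlin_frob : A * (1 - γ ^ p) + B = 0 := by
    simpa only [A, B, map_add, map_sub, map_mul, map_one, map_natCast, map_zero, frobenius_def]
      using congrArg (frobenius F p) hlin
  have hA : A = 0 := by
    have : A * (γ - γ ^ p) = 0 := by linear_combination hlin_frob - hlin
    exact (mul_eq_zero.1 this).resolve_right (sub_ne_zero.2 (Ne.symm hγp))
  have hB : B = 0 := by rwa [hA, zero_mul, zero_add] at hlin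
  have hfactor : ((v : F) - v') * ((v : F) - w) = 0 := by linear_combination (v : F) * hB - hA
  rcases mul_eq_zero.1 hfactor with h1 | h1
  · exact .inl ⟨sub_eq_zero.1 h1, by linear_combination h1 - hB⟩
  · exact .inr (sub_eq_zero.1 h1)

variable [Fintype F]

theorem eq_of_cast_eq (hγ : γ ≠ 0) (hi : ExpEqLinear γ i) (hj : ExpEqLinear γ j)
    (hi' : i < orderOf γ * p) (hj' : j < orderOf γ * p) (h : (i : F) = j) : i = j :=
  have hd := modEq_orderOf_of_cast_eq (FiniteField.isOfFinOrder hγ) hi hj h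
  ((Nat.modEq_and_modEq_iff_modEq_mul (FiniteField.orderOf_coprime_charP hγ)).1
    ⟨hd, (CharP.natCast_eq_natCast F p).1 h⟩).eq_of_lt_of_lt hi' hj'

variable [DecidablePred (ExpEqLinear γ)]

theorem count_period_le_prime (hγ : γ ≠ 0) : Nat.count (ExpEqLinear γ) (orderOf γ * p) ≤ p :=
  Nat.count_le_of_modEq_imp_eq (Fact.out : p.Prime).pos fun _ hi _ hj hPi hPj h ↦
    eq_of_cast_eq hγ hPi hPj hi hj ((CharP.natCast_eq_natCast F p).2 h)

theorem count_period_le_orderOf (hγ0 : γ ≠ 0) (hγ1 : γ ≠ 1) :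
    Nat.count (ExpEqLinear γ) (orderOf γ * p) ≤ orderOf γ :=
  Nat.count_le_of_modEq_imp_eq (FiniteField.isOfFinOrder hγ0).orderOf_pos
    fun _ hi _ hj hPi hPj h ↦
      eq_of_cast_eq hγ0 hPi hPj hi hj (cast_eq_of_modEq_orderOf hγ1 hPi hPj h)

theorem count_period_mul_sub_one_lt (hγ : γ ≠ 0) (hγp : γ ^ p ≠ γ) :
    Nat.count (ExpEqLinear γ) (orderOf γ * p) * (Nat.count (ExpEqLinear γ) (orderOf γ * p) - 1) <
      orderOf γ := by
  rw [Nat.count_eq_card_filter_range]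
  refine card_mul_card_sub_one_lt_of_modEq (FiniteField.isOfFinOrder hγ).orderOf_pos ?_
  intro v hv w hw v' hv' w' hw' hne h
  simp only [mem_filter, mem_range] at hv hw hv' hw'
  rcases cast_eq_or_cast_eq_of_add_modEq hγp hv.2 hw.2 hv'.2 hw'.2 h with ⟨hvv', hww'⟩ | hvw
  · exact ⟨eq_of_cast_eq hγ hv.2 hv'.2 hv.1 hv'.1 hvv', eq_of_cast_eq hγ hw.2 hw'.2 hw.1 hw'.1 hww'⟩
  · exact absurd (eq_of_cast_eq hγ hv.2 hw.2 hv.1 hw.1 hvw) hne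

theorem count_card_sub_one_add_two_le (hγ0 : γ ≠ 0) (hγ1 : γ ≠ 1) (hγp : γ ^ p = γ) :
    Nat.count (ExpEqLinear γ) (Fintype.card F - 1) + 2 ≤
      Fintype.card F / p + Nat.count (ExpEqLinear γ) p := by
  have hp : p.Prime := Fact.out
  have hp1 := hp.one_le
  have hpq : p ∣ Fintype.card F := (CharP.cast_eq_zero_iff F p _).1 (Nat.cast_card_eq_zero F)
  have hp_le_q : p ≤ Fintype.card F := Nat.le_of_dvd Fintype.card_pos hpq
  have hdq : orderOf γ ∣ Fintype.card F - 1 :=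
    orderOf_dvd_of_pow_eq_one (FiniteField.pow_card_sub_one_eq_one γ hγ0)
  have hdp : orderOf γ ∣ p - 1 := orderOf_dvd_of_pow_eq_one <| mul_right_cancel₀ hγ0 <| by
    rw [← pow_succ, Nat.sub_add_cancel hp1, hγp, one_mul]
  obtain ⟨Q, hQ⟩ : orderOf γ * p ∣ Fintype.card F - p :=
    (FiniteField.orderOf_coprime_charP hγ0).mul_dvd_of_dvd_of_dvd
      (by simpa [show Fintype.card F - 1 - (p - 1) = Fintype.card F - p by omega]
        using Nat.dvd_sub hdq hdp)
      (Nat.dvd_sub hpq dvd_rfl)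
  have hqp : Fintype.card F / p = Q * orderOf γ + 1 := by
    rw [Nat.div_eq_iff_eq_mul_left hp.pos hpq]
    linarith [Nat.sub_add_cancel hp_le_q]
  have hsplit : Fintype.card F - 1 = Q * (orderOf γ * p) + (p - 1) := by
    rw [mul_comm Q, ← hQ]
    omega
  have hlast : Nat.count (ExpEqLinear γ) p = Nat.count (ExpEqLinear γ) (p - 1) + 1 := by
    conv_lhs => rw [← Nat.sub_add_cancel hp1]
    rw [Nat.count_succ, if_pos (sub_one_of_pow_eq_self hγp)]
  rw [hsplit, Nat.count_mul_add_of_periodic periodic, hqp, hlast]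
  have := Nat.mul_le_mul_left Q (count_period_le_orderOf hγ0 hγ1)
  linarith

theorem count_card_sub_one_le (hγ : γ ≠ 0) (hγp : γ ^ p ≠ γ) (hq : p * p ≤ Fintype.card F) :
    Nat.count (ExpEqLinear γ) (Fintype.card F - 1) ≤ Fintype.card F / p + 1 := by
  have hp : p.Prime := Fact.out
  have hp2 := hp.two_le
  have hpq : p ∣ Fintype.card F := (CharP.cast_eq_zero_iff F p _).1 (Nat.cast_card_eq_zero F)
  have hq0 : 0 < Fintype.card F := Fintype.card_pos
  set k := (Fintype.card F - 2) / p / orderOf γ + 1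
  have hcover : Fintype.card F - 1 ≤ k * (orderOf γ * p) + 0 := by
    have := Nat.lt_mul_div_succ (Fintype.card F - 2)
      (Nat.mul_pos (FiniteField.isOfFinOrder hγ).orderOf_pos hp.pos)
    simp only [k]
    rw [Nat.div_div_eq_div_mul, mul_comm p, mul_comm _ (orderOf γ * p)]
    omega
  have hTR : Nat.count (ExpEqLinear γ) (orderOf γ * p) ≤ (Fintype.card F - 2) / p + 1 := by
    have : p - 1 ≤ (Fintype.card F - 2) / p :=
      (Nat.le_div_iff_mul_le hp.pos).2 (by rw [Nat.sub_one_mul]; omega)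
    have := count_period_le_prime (F := F) hγ
    omega
  calc Nat.count (ExpEqLinear γ) (Fintype.card F - 1)
      ≤ Nat.count (ExpEqLinear γ) (k * (orderOf γ * p) + 0) := Nat.count_monotone _ hcover
    _ = k * Nat.count (ExpEqLinear γ) (orderOf γ * p) := by
      rw [Nat.count_mul_add_of_periodic periodic, Nat.count_zero, add_zero]
    _ ≤ (Fintype.card F - 2) / p + 2 :=
      Nat.div_add_one_mul_le (count_period_mul_sub_one_lt hγ hγp) hTR
    _ ≤ Fintype.card F / p + 1 := by
      have := Nat.div_lt_div_of_lt_of_dvd hpq (show Fintype.card F - 2 < Fintype.card F by omega)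
      omega

theorem count_card_sub_one_le_add_sqrt (hγ : γ ≠ 1) (hq : p * p ≤ Fintype.card F) :
    (Nat.count (ExpEqLinear γ) (Fintype.card F - 1) : ℝ) ≤
      (Fintype.card F / p : ℕ) + √(3 * p / 2 - 39 / 16) + 1 / 4 := by
  have hu : 3 / 4 ≤ √(3 * (p : ℝ) / 2 - 39 / 16) := by
    have : (2 : ℝ) ≤ p := by exact_mod_cast (Fact.out : p.Prime).two_le
    exact (Real.le_sqrt' (by norm_num)).2 (by linarith)
  rcases eq_or_ne γ 0 with rfl | hγ0
  · have : Nat.count (ExpEqLinear (0 : F)) (Fintype.card F - 1) ≤ Fintype.card F / p := by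
      rw [count_zero]
      exact Nat.div_le_div_right (Nat.sub_le _ _)
    have : (Nat.count (ExpEqLinear (0 : F)) (Fintype.card F - 1) : ℝ) ≤
        (Fintype.card F / p : ℕ) := by exact_mod_cast this
    linarith
  by_cases hγp : γ ^ p = γ
  · have : (Nat.count (ExpEqLinear γ) (Fintype.card F - 1) : ℝ) + 2 ≤
        (Fintype.card F / p : ℕ) + Nat.count (ExpEqLinear γ) p := by
      exact_mod_cast count_card_sub_one_add_two_le hγ0 hγ hγp
    linarith [count_prime_le (p := p) hγ]
  · have : (Nat.count (ExpEqLinear γ) (Fintype.card F - 1) : ℝ) ≤ (Fintype.card F / p : ℕ) + 1 := by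
      exact_mod_cast count_card_sub_one_le hγ0 hγp hq
    linarith

end ExpEqLinear

end

theorem card_exp_eq_linear_le_q_div_p_general {p n : ℕ} [Fact p.Prime] (hn : 1 < n)
    {F : Type*} [Field F] [Fintype F] [CharP F p] (hcard : Fintype.card F = p ^ n)
    (γ : F) (hγ : γ ≠ 1) :
    ({i : ℕ | 1 ≤ i ∧ i ≤ p ^ n - 2 ∧ γ ^ (i + 1) = (i : F) * (1 - γ) + 1}.ncard : ℝ) ≤
      (p : ℝ) ^ n / p + Real.sqrt (3 * p / 2 - 39 / 16) + 1 / 4 := by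
  classical
  have hq : p * p ≤ Fintype.card F :=
    hcard ▸ sq p ▸ Nat.pow_le_pow_right (Fact.out : p.Prime).pos hn
  have hqp : ((Fintype.card F / p : ℕ) : ℝ) ≤ (p : ℝ) ^ n / p := by
    rw [hcard]
    exact_mod_cast Nat.cast_div_le
  calc (_ : ℝ) = Nat.count (ExpEqLinear γ) (Fintype.card F - 1) := by
        rw [hcard]
        exact_mod_cast Nat.ncard_Icc_filter_eq_count (ExpEqLinear.not_zero hγ) _
    _ ≤ (Fintype.card F / p : ℕ) + √(3 * p / 2 - 39 / 16) + 1 / 4 :=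
        ExpEqLinear.count_card_sub_one_le_add_sqrt hγ hq
    _ ≤ _ := by gcongr

/-- **Proposition.** For `p` an odd prime, `n > 1`, `F` the finite field with `q = p^n`
elements and `γ ∈ F \ {1}`:
`#{1 ≤ i ≤ q-2 : γ^{i+1} = i(1-γ) + 1} ≤ q/p + √(3p/2 - 39/16) + 1/4`. -/
theorem card_exp_eq_linear_le_q_div_p {p n : ℕ} [Fact p.Prime] (hp : Odd p) (hn : 1 < n)
    {F : Type*} [Field F] [Fintype F] [CharP F p] (hcard : Fintype.card F = p ^ n)
    (γ : F) (hγ : γ ≠ 1) :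
    ({i : ℕ | 1 ≤ i ∧ i ≤ p ^ n - 2 ∧ γ ^ (i + 1) = (i : F) * (1 - γ) + 1}.ncard : ℝ) ≤
      (p : ℝ) ^ n / p + Real.sqrt (3 * p / 2 - 39 / 16) + 1 / 4 :=
  card_exp_eq_linear_le_q_div_p_general hn hcard γ hγ
end

section
/- Let n be a positive integer and q = 11^n. The polynomial f_n(x) = Σ_{i=1}^{q−2} [ 4^{i+1}(2 − i) − 6^i ] x^i ∈ F_q[x] (coefficients computed in F_q, with the integer i acting via ℤ → F_q) satisfies f_n(x) ≡ ((2 − x)^{q−2} + 1)^{q−2} − 8 (mod x^q − x); in particular f_n is a permutation polynomial of F_q with Carlitz rank 2, and its weight is ω(f_n) = 11^n − 11^{n−1} − 4. -/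
open Polynomial

noncomputable def carlitzChain {F : Type*} [Field F] (q : ℕ) (a : ℕ → F) : ℕ → F[X]
  | 0 => C (a 0) * X + C (a 1)
  | n + 1 => carlitzChain q a n ^ (q - 2) + C (a (n + 2))

/-- `f` is congruent mod `X^q - X` to a Carlitz chain of length `n`. -/
def IsCarlitzRep {F : Type*} [Field F] (q : ℕ) (f : F[X]) (n : ℕ) : Prop :=
  ∃ a : ℕ → F, a 0 ≠ 0 ∧ (∀ i, 2 ≤ i → i ≤ n → a i ≠ 0) ∧
    (X ^ q - X : F[X]) ∣ f - carlitzChain q a n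

/-- The Carlitz rank of a permutation polynomial. -/
noncomputable def carlitzRank {F : Type*} [Field F] (q : ℕ) (f : F[X]) : ℕ :=
  sInf {n | IsCarlitzRep q f n}

/-- The weight: number of nonzero coefficients of the reduction of `f` mod `X^q - X`. -/
noncomputable def polyWeight {F : Type*} [Field F] (q : ℕ) (f : F[X]) : ℕ :=
  (f %ₘ (X ^ q - X)).support.card

/-- `ν_p` from the paper. -/
noncomputable def nuP (p : ℕ) [Fact p.Prime] : ℕ :=
  Finset.sup (Finset.univ.erase (1 : ZMod p)) fun γ =>
    ((Finset.Icc 1 (p - 2)).filter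
      (fun i : ℕ => γ ^ (i + 1) = (i : ZMod p) * (1 - γ) + 1)).card

instance : Fact (Nat.Prime 11) := ⟨by norm_num⟩

open Finset

/-!
For `t ∈ F_q \ {0, 1}` one has `∑_{i=1}^{q-2} t^i = -1` and `(1 - t) ∑_{i=1}^{q-2} i t^i = 1`, since
`t^{q-1} = 1` and `q = 0` in `F_q`. Writing `f_n(x) = 8 S(4x) - 4 T(4x) - S(6x)` with these two sums,
this evaluates `f_n(x)` to `((2 - x)⁻¹ + 1)⁻¹ - 8` for every `x`; the points `x = 0, 2, 3`, where
`4x` or `6x` lies in `{0, 1}`, are checked by hand. A polynomial vanishing on `F_q` is divisible by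
`X^q - X`, which gives the congruence, and the map is visibly injective.

Off `{2, 3}` the map equals the Möbius function `x ↦ (x - 3)⁻¹ - 7`, but at `x = 2` it does not.
Since two maps of the form `x ↦ (ax + b)⁻¹ + c` agreeing at three points (away from poles)
coincide, the map has no Carlitz representation of length 1; three values rule out length 0.

The coefficients lie in `F_11` and are periodic in `i` with period `110 = 10 · 11`, with exactly
`100` nonzero ones per period; as `q - 1 ≡ 10 (mod 110)`, counting gives the weight.
-/

section RingSums

variable {R : Type*} [CommRing R]

theorem sub_one_mul_sum_Icc_pow (t : R) (m : ℕ) :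
    (t - 1) * ∑ i ∈ Icc 1 m, t ^ i = t ^ (m + 1) - t := by
  induction m with
  | zero => simp
  | succ m ih =>
    rw [sum_Icc_succ_top (by omega), mul_add, ih]
    ring

theorem sub_one_mul_sum_Icc_natCast_mul_pow (t : R) (m : ℕ) :
    (t - 1) * ∑ i ∈ Icc 1 m, (i : R) * t ^ i = m * t ^ (m + 1) - ∑ i ∈ Icc 1 m, t ^ i := by
  induction m with
  | zero => simp
  | succ m ih =>
    rw [sum_Icc_succ_top (by omega), sum_Icc_succ_top (by omega), mul_add, ih]
    push_cast
    ring

theorem two_mul_sum_Icc_natCast (m : ℕ) : 2 * ∑ i ∈ Icc 1 m, (i : R) = m * (m + 1) := by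
  induction m with
  | zero => simp
  | succ m ih =>
    rw [sum_Icc_succ_top (by omega), mul_add, ih]
    push_cast
    ring

end RingSums

namespace FiniteField

variable {K : Type*} [Field K] [Fintype K]

local notation "q" => Fintype.card K

theorem pow_card_sub_two_eq_inv (hq : 2 < q) (x : K) : x ^ (q - 2) = x⁻¹ := by
  rcases eq_or_ne x 0 with rfl | hx
  · rw [zero_pow (by omega), inv_zero]
  · refine eq_inv_of_mul_eq_one_left ?_
    rw [← pow_succ, show q - 2 + 1 = q - 1 by omega, pow_card_sub_one_eq_one x hx]

theorem X_pow_card_sub_X_dvd_iff {p : K[X]} : X ^ q - X ∣ p ↔ ∀ x, p.eval x = 0 := by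
  refine ⟨fun ⟨r, hr⟩ x => by simp [hr, pow_card], fun h => ?_⟩
  rcases eq_or_ne p 0 with rfl | hp
  · exact dvd_zero _
  have hmonic : (X ^ q - X : K[X]).Monic :=
    monic_X_pow_sub (degree_X_le.trans_lt (by exact_mod_cast Fintype.one_lt_card))
  have hsplit := prod_multiset_X_sub_C_of_monic_of_roots_card_eq hmonic (by
    rw [roots_X_pow_card_sub_X, card_val, card_univ,
      X_pow_card_sub_X_natDegree_eq K Fintype.one_lt_card])
  rw [← hsplit, Multiset.prod_X_sub_C_dvd_iff_le_roots hp, roots_X_pow_card_sub_X,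
    Multiset.le_iff_subset univ.nodup]
  exact fun x _ => (mem_roots hp).2 (h x)

theorem X_pow_card_sub_X_dvd_sub_iff {f g : K[X]} :
    X ^ q - X ∣ f - g ↔ ∀ x, f.eval x = g.eval x := by
  simp only [X_pow_card_sub_X_dvd_iff, eval_sub, sub_eq_zero]

theorem natCast_card_sub_two : ((q - 2 : ℕ) : K) = -2 := by
  rw [Nat.cast_sub (by have := Fintype.one_lt_card (α := K); omega), cast_card_eq_zero]
  ring

theorem sum_Icc_pow_eq_neg_one {t : K} (ht0 : t ≠ 0) (ht1 : t ≠ 1) :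
    ∑ i ∈ Icc 1 (q - 2), t ^ i = -1 := by
  have h := sub_one_mul_sum_Icc_pow t (q - 2)
  rw [show q - 2 + 1 = q - 1 by have := Fintype.one_lt_card (α := K); omega,
    pow_card_sub_one_eq_one t ht0] at h
  refine mul_left_cancel₀ (sub_ne_zero.2 ht1) ?_
  rw [h]
  ring

theorem one_sub_mul_sum_Icc_natCast_mul_pow {t : K} (ht0 : t ≠ 0) (ht1 : t ≠ 1) :
    (1 - t) * ∑ i ∈ Icc 1 (q - 2), (i : K) * t ^ i = 1 := by
  have h := sub_one_mul_sum_Icc_natCast_mul_pow t (q - 2)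
  rw [show q - 2 + 1 = q - 1 by have := Fintype.one_lt_card (α := K); omega,
    pow_card_sub_one_eq_one t ht0, sum_Icc_pow_eq_neg_one ht0 ht1, natCast_card_sub_two] at h
  linear_combination -h

theorem sum_Icc_one_pow : ∑ i ∈ Icc 1 (q - 2), (1 : K) ^ i = -2 := by
  simp [natCast_card_sub_two]

theorem sum_Icc_natCast_mul_one_pow (h2 : (2 : K) ≠ 0) :
    ∑ i ∈ Icc 1 (q - 2), (i : K) * 1 ^ i = 1 := by
  have h := two_mul_sum_Icc_natCast (R := K) (q - 2)
  rw [natCast_card_sub_two] at h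
  simp only [one_pow, mul_one]
  exact mul_left_cancel₀ h2 (by rw [h]; ring)

theorem eval_carlitzChain_succ (hq : 2 < q) (a : ℕ → K) (k : ℕ) (x : K) :
    (carlitzChain q a (k + 1)).eval x = ((carlitzChain q a k).eval x)⁻¹ + a (k + 2) := by
  simp [carlitzChain, pow_card_sub_two_eq_inv hq]

end FiniteField

-- Two maps `x ↦ (x - u)⁻¹ - d` and `x ↦ (a * x + b)⁻¹` agreeing at three points coincide:
-- clearing denominators gives a polynomial of degree at most `2` vanishing on `s`.
theorem eq_of_inv_sub_eq_inv_affine {K : Type*} [Field K] (h2 : (2 : K) ≠ 0) {u a b d : K}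
    {s : Finset K} (hs : 3 ≤ s.card)
    (h : ∀ x ∈ s, x ≠ u ∧ a * x + b ≠ 0 ∧ (x - u)⁻¹ - d = (a * x + b)⁻¹) :
    a = 1 ∧ b = -u ∧ d = 0 := by
  set Q : K[X] := (C a * X + C b) * (1 - C d * (X - C u)) - (X - C u)
  have hQ : Q = 0 := by
    refine eq_zero_of_degree_lt_of_eval_finset_eq_zero s ?_ fun x hx => ?_
    · refine lt_of_le_of_lt (b := 2) ?_ (by exact_mod_cast hs)
      unfold Q
      compute_degree
    · obtain ⟨hxu, hx0, hx⟩ := h x hx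
      have hcleared : (a * x + b) * (1 - d * (x - u)) = x - u :=
        calc (a * x + b) * (1 - d * (x - u))
            = (a * x + b) * ((x - u)⁻¹ - d) * (x - u) := by
              rw [mul_assoc, sub_mul, inv_mul_cancel₀ (sub_ne_zero.2 hxu)]
          _ = x - u := by rw [hx, mul_inv_cancel₀ hx0, one_mul]
      simp only [Q, eval_sub, eval_mul, eval_add, eval_C, eval_X, eval_one]
      linear_combination hcleared
  have e0 := congr_arg (eval u) hQ
  have e1 := congr_arg (eval (u + 1)) hQ
  have e2 := congr_arg (eval (u + 2)) hQ
  simp only [Q, eval_sub, eval_mul, eval_add, eval_C, eval_X, eval_one, eval_zero] at e0 e1 e2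
  have h1 : a * (1 - d) = 1 := by linear_combination e1 - (1 - d) * e0
  have h2' : a * (1 - 2 * d) = 1 :=
    mul_left_cancel₀ h2 (by linear_combination e2 - (1 - 2 * d) * e0)
  have had : a * d = 0 := by linear_combination h1 - h2'
  have ha : a = 1 := by linear_combination h1 + had
  refine ⟨ha, by linear_combination e0 - u * ha, ?_⟩
  simpa [ha] using had

theorem carlitzRank_eq_of_isCarlitzRep {F : Type*} [Field F] {q n : ℕ} {f : F[X]}
    (h : IsCarlitzRep q f n) (hlt : ∀ m < n, ¬ IsCarlitzRep q f m) : carlitzRank q f = n :=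
  le_antisymm (Nat.sInf_le h) (le_csInf ⟨n, h⟩ fun m hm => not_lt.1 fun hmn => hlt m hmn hm)

section ExampleMap

variable {K : Type*} [Field K]

-- The map `x ↦ ((2 - x)^(q-2) + 1)^(q-2) - 8` of `F_q`, using `x^(q-2) = x⁻¹`.
def exampleMap (x : K) : K := ((2 - x)⁻¹ + 1)⁻¹ - 8

theorem exampleMap_injective : Function.Injective (exampleMap (K := K)) := by
  intro x y h
  simpa [exampleMap] using h

theorem exampleMap_eq_of_ne {x : K} (hx2 : x ≠ 2) (hx3 : x ≠ 3) :
    exampleMap x = (x - 3)⁻¹ - 7 := by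
  have h2 : 2 - x ≠ 0 := sub_ne_zero.2 (Ne.symm hx2)
  have h3 : x - 3 ≠ 0 := sub_ne_zero.2 hx3
  rw [exampleMap, show (2 - x)⁻¹ + 1 = -((x - 3) / (2 - x)) by field_simp; ring]
  field_simp
  ring

theorem exampleMap_two : exampleMap (2 : K) = -7 := by
  norm_num [exampleMap]

theorem exampleMap_three : exampleMap (3 : K) = -8 := by
  norm_num [exampleMap]

variable [CharP K 11]

theorem exampleMap_zero : exampleMap (0 : K) = 0 := by
  have h11 : (11 : K) = 0 := CharP.ofNat_eq_zero K 11
  rw [exampleMap, sub_zero,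
    inv_eq_of_mul_eq_one_right (show (2 : K) * 6 = 1 by linear_combination h11),
    inv_eq_of_mul_eq_one_right (show (6 + 1 : K) * 8 = 1 by linear_combination 5 * h11), sub_self]

theorem eleven_le_card [Fintype K] : 11 ≤ Fintype.card K := by
  simpa using Fintype.card_le_of_injective _ (ZMod.castHom (dvd_refl 11) K).injective

end ExampleMap

def exampleCoeff (R : Type*) [CommRing R] (i : ℕ) : R := 4 ^ (i + 1) * (2 - i) - 6 ^ i

theorem castHom_exampleCoeff {K : Type*} [Field K] [CharP K 11] (i : ℕ) :
    ZMod.castHom (dvd_refl 11) K (exampleCoeff (ZMod 11) i) = exampleCoeff K i := by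
  simp only [exampleCoeff, map_sub, map_mul, map_pow, map_natCast, map_ofNat]

theorem exampleCoeff_add_110 (i : ℕ) :
    exampleCoeff (ZMod 11) (i + 110) = exampleCoeff (ZMod 11) i := by
  have h4 : (4 : ZMod 11) ^ 110 = 1 := by rw [pow_mul (4 : ZMod 11) 10 11]; decide
  have h6 : (6 : ZMod 11) ^ 110 = 1 := by rw [pow_mul (6 : ZMod 11) 10 11]; decide
  have h110 : ((110 : ℕ) : ZMod 11) = 0 := by decide
  rw [exampleCoeff, exampleCoeff, add_right_comm i 110 1, pow_add (4 : ZMod 11) (i + 1) 110,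
    pow_add (6 : ZMod 11) i 110, h4, h6, Nat.cast_add, h110]
  ring

theorem count_exampleCoeff_ne_zero (m : ℕ) :
    Nat.count (fun i => exampleCoeff (ZMod 11) i ≠ 0) (110 * m + 10) = 100 * m + 7 := by
  induction m with
  | zero => decide +kernel
  | succ m ih =>
    rw [show 110 * (m + 1) + 10 = 110 + (110 * m + 10) by ring, Nat.count_add]
    simp only [add_comm 110, exampleCoeff_add_110, ih]
    have : Nat.count (fun i => exampleCoeff (ZMod 11) i ≠ 0) 110 = 100 := by decide +kernel
    omega

noncomputable def examplePoly (K : Type*) [Field K] [Fintype K] : K[X] :=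
  ∑ i ∈ Icc 1 (Fintype.card K - 2), C (exampleCoeff K i) * X ^ i

section ExamplePoly

variable {K : Type*} [Field K] [Fintype K]

local notation "q" => Fintype.card K

theorem coeff_examplePoly (j : ℕ) :
    (examplePoly K).coeff j = if j ∈ Icc 1 (q - 2) then exampleCoeff K j else 0 := by
  simp only [examplePoly, finsetSum_coeff, coeff_C_mul_X_pow]
  rw [sum_ite_eq]

theorem degree_examplePoly_lt : (examplePoly K).degree < q := by
  refine degree_lt_iff_coeff_zero _ _ |>.2 fun j hj => ?_
  rw [coeff_examplePoly, if_neg]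
  simp only [mem_Icc]
  omega

theorem eval_examplePoly_eq_sums (x : K) :
    (examplePoly K).eval x = 8 * ∑ i ∈ Icc 1 (q - 2), (4 * x) ^ i
      - 4 * ∑ i ∈ Icc 1 (q - 2), (i : K) * (4 * x) ^ i - ∑ i ∈ Icc 1 (q - 2), (6 * x) ^ i := by
  simp only [examplePoly, eval_finsetSum, mul_sum, ← sum_sub_distrib]
  refine sum_congr rfl fun i _ => ?_
  simp only [exampleCoeff, eval_mul, eval_pow, eval_C, eval_X]
  ring

theorem eval_zero_examplePoly : (examplePoly K).eval 0 = 0 := by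
  simp only [examplePoly, eval_finsetSum, eval_mul, eval_pow, eval_X]
  exact sum_eq_zero fun i hi => by rw [zero_pow (by simp at hi; omega), mul_zero]

variable [CharP K 11]

theorem eval_examplePoly (x : K) : (examplePoly K).eval x = exampleMap x := by
  have h11 : (11 : K) = 0 := CharP.ofNat_eq_zero K 11
  have hne (a b : ℕ) (h : ¬ a ≡ b [MOD 11]) : (a : K) ≠ b := (CharP.natCast_eq_natCast K 11).not.2 h
  by_cases hx0 : x = 0
  · rw [hx0, eval_zero_examplePoly, exampleMap_zero]
  rw [eval_examplePoly_eq_sums]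
  by_cases hx2 : x = 2
  · have h80 : (8 : K) ≠ 0 := by exact_mod_cast hne 8 0 (by decide)
    have h81 : (8 : K) ≠ 1 := by exact_mod_cast hne 8 1 (by decide)
    have hT := FiniteField.one_sub_mul_sum_Icc_natCast_mul_pow h80 h81
    rw [hx2, show (4 : K) * 2 = 8 by norm_num, show (6 : K) * 2 = 1 by linear_combination h11,
      FiniteField.sum_Icc_pow_eq_neg_one h80 h81, FiniteField.sum_Icc_one_pow, exampleMap_two]
    linear_combination -hT - (∑ i ∈ Icc 1 (q - 2), (i : K) * 8 ^ i) * h11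
  by_cases hx3 : x = 3
  · rw [hx3, show (4 : K) * 3 = 1 by linear_combination h11,
      show (6 : K) * 3 = 7 by linear_combination h11,
      FiniteField.sum_Icc_pow_eq_neg_one (t := 7) (by exact_mod_cast hne 7 0 (by decide))
        (by exact_mod_cast hne 7 1 (by decide)),
      FiniteField.sum_Icc_one_pow,
      FiniteField.sum_Icc_natCast_mul_one_pow (by exact_mod_cast hne 2 0 (by decide)),
      exampleMap_three]
    linear_combination -h11
  have h4 : (4 : K) ≠ 0 := by exact_mod_cast hne 4 0 (by decide)
  have h6 : (6 : K) ≠ 0 := by exact_mod_cast hne 6 0 (by decide)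
  have h4x : 4 * x ≠ 1 := fun h => hx3 (mul_left_cancel₀ h4 (by linear_combination h - h11))
  have h6x : 6 * x ≠ 1 := fun h => hx2 (mul_left_cancel₀ h6 (by linear_combination h - h11))
  have hT := FiniteField.one_sub_mul_sum_Icc_natCast_mul_pow (mul_ne_zero h4 hx0) h4x
  rw [FiniteField.sum_Icc_pow_eq_neg_one (mul_ne_zero h4 hx0) h4x,
    FiniteField.sum_Icc_pow_eq_neg_one (mul_ne_zero h6 hx0) h6x, exampleMap_eq_of_ne hx2 hx3,
    eq_sub_iff_add_eq]
  refine eq_inv_of_mul_eq_one_left ?_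
  linear_combination hT + (∑ i ∈ Icc 1 (q - 2), (i : K) * (4 * x) ^ i) * h11

theorem X_pow_card_sub_X_dvd_examplePoly_sub :
    X ^ q - X ∣ examplePoly K - (((C 2 - X) ^ (q - 2) + 1) ^ (q - 2) - C 8) := by
  have hq : 2 < q := by have := eleven_le_card (K := K); omega
  refine FiniteField.X_pow_card_sub_X_dvd_sub_iff.2 fun x => ?_
  simp [eval_examplePoly, FiniteField.pow_card_sub_two_eq_inv hq, exampleMap]

theorem isCarlitzRep_examplePoly_two : IsCarlitzRep q (examplePoly K) 2 := by
  refine ⟨fun i => [-1, 2, 1, -8].getD i 0, by simp, fun i h2 h2' => ?_, ?_⟩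
  · obtain rfl : i = 2 := by omega
    simp
  · convert X_pow_card_sub_X_dvd_examplePoly_sub (K := K) using 2
    simp [carlitzChain]
    ring

theorem not_isCarlitzRep_examplePoly_zero : ¬ IsCarlitzRep q (examplePoly K) 0 := by
  rintro ⟨a, -, -, hdvd⟩
  have h := FiniteField.X_pow_card_sub_X_dvd_sub_iff.1 hdvd
  have e0 := h 0
  have e2 := h 2
  have e3 := h 3
  simp only [eval_examplePoly, carlitzChain, eval_add, eval_mul, eval_C, eval_X, exampleMap_zero,
    exampleMap_two, exampleMap_three] at e0 e2 e3
  exact (CharP.natCast_eq_natCast K 11).not.2 (by decide : ¬ 5 ≡ 0 [MOD 11])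
    (by push_cast; linear_combination 2 * e3 - 3 * e2 + e0)

-- A length-1 representation `(a₀ x + a₁)⁻¹ + a₂` would agree with `(x - 3)⁻¹ - 7` off the at most
-- three points `2`, `3`, `-a₁ / a₀`, hence be equal to it, which is false at `x = 2`.
theorem not_isCarlitzRep_examplePoly_one : ¬ IsCarlitzRep q (examplePoly K) 1 := by
  classical
  rintro ⟨a, ha0, -, hdvd⟩
  have hq : 2 < q := by have := eleven_le_card (K := K); omega
  have h (x : K) : exampleMap x = (a 0 * x + a 1)⁻¹ + a 2 := by
    rw [← eval_examplePoly, FiniteField.X_pow_card_sub_X_dvd_sub_iff.1 hdvd x,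
      FiniteField.eval_carlitzChain_succ hq]
    simp [carlitzChain]
  set s := univ.filter fun x : K => x ≠ 2 ∧ x ≠ 3 ∧ a 0 * x + a 1 ≠ 0
  have hs : 3 ≤ s.card := by
    have hsub : univ \ {2, 3, -a 1 / a 0} ⊆ s := by
      intro x hx
      simp only [mem_sdiff, mem_univ, mem_insert, mem_singleton, true_and, not_or] at hx
      refine mem_filter.2 ⟨mem_univ x, hx.1, hx.2.1, fun h0 => hx.2.2 ?_⟩
      field_simp
      linear_combination h0
    have := le_card_sdiff {2, 3, -a 1 / a 0} (univ : Finset K)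
    have := card_le_three (a := (2 : K)) (b := 3) (c := -a 1 / a 0)
    have := card_le_card hsub
    have := eleven_le_card (K := K)
    rw [card_univ] at *
    omega
  obtain ⟨ha, hb, hd⟩ := eq_of_inv_sub_eq_inv_affine (u := 3) (a := a 0) (b := a 1)
    (d := 7 + a 2) (by exact_mod_cast (CharP.natCast_eq_natCast K 11).not.2 (by decide : ¬ 2 ≡ 0 [MOD 11]))
    hs fun x hx => by
      obtain ⟨-, hx2, hx3, hx0⟩ := mem_filter.1 hx
      refine ⟨hx3, hx0, ?_⟩
      rw [← sub_eq_iff_eq_add.2 (h x), exampleMap_eq_of_ne hx2 hx3]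
      ring
  have e2 := h 2
  rw [exampleMap_two, ha, hb] at e2
  norm_num at e2
  exact one_ne_zero (α := K) (by linear_combination e2 + hd)

theorem carlitzRank_examplePoly : carlitzRank q (examplePoly K) = 2 :=
  carlitzRank_eq_of_isCarlitzRep isCarlitzRep_examplePoly_two fun m hm => by
    interval_cases m
    exacts [not_isCarlitzRep_examplePoly_zero, not_isCarlitzRep_examplePoly_one]

theorem support_examplePoly :
    (examplePoly K).support = (Icc 1 (q - 2)).filter fun i => exampleCoeff (ZMod 11) i ≠ 0 := by
  ext j
  rw [mem_support_iff, coeff_examplePoly, mem_filter]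
  split_ifs with hj
  · rw [← castHom_exampleCoeff, map_ne_zero_iff _ (ZMod.castHom (dvd_refl 11) K).injective]
    exact (and_iff_right hj).symm
  · simp [hj]

theorem polyWeight_examplePoly {n : ℕ} (hn : 0 < n) (hq : q = 11 ^ n) :
    polyWeight q (examplePoly K) = 11 ^ n - 11 ^ (n - 1) - 4 := by
  have hmonic : (X ^ q - X : K[X]).Monic :=
    monic_X_pow_sub (degree_X_le.trans_lt (by exact_mod_cast Fintype.one_lt_card))
  have hdeg : (X ^ q - X : K[X]).degree = q := by
    rw [degree_eq_natDegree hmonic.ne_zero,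
      FiniteField.X_pow_card_sub_X_natDegree_eq K Fintype.one_lt_card]
  rw [polyWeight, (modByMonic_eq_self_iff hmonic).2 (hdeg ▸ degree_examplePoly_lt),
    support_examplePoly]
  obtain ⟨m, hm⟩ : ∃ m, 11 ^ (n - 1) = 10 * m + 1 :=
    ⟨11 ^ (n - 1) / 10, by have := Nat.pow_mod 11 (n - 1) 10; norm_num at this; omega⟩
  have hpow : 11 ^ n = 110 * m + 11 := by
    rw [← Nat.sub_add_cancel hn, pow_succ, hm]
    ring
  have hrange : (range (q - 1)).filter (fun i => exampleCoeff (ZMod 11) i ≠ 0) =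
      insert 0 ((Icc 1 (q - 2)).filter fun i => exampleCoeff (ZMod 11) i ≠ 0) := by
    ext i
    simp only [mem_filter, mem_range, mem_insert, mem_Icc]
    constructor
    · rintro ⟨hi, hc⟩
      rcases Nat.eq_zero_or_pos i with rfl | hi0
      · exact .inl rfl
      · exact .inr ⟨⟨hi0, by omega⟩, hc⟩
    · rintro (rfl | ⟨hi, hc⟩)
      · exact ⟨by omega, by decide⟩
      · exact ⟨by omega, hc⟩
  have hcount := count_exampleCoeff_ne_zero m
  rw [show 110 * m + 10 = q - 1 by omega, Nat.count_eq_card_filter_range, hrange,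
    card_insert_of_notMem (by simp)] at hcount
  omega

end ExamplePoly

/-- **Example.** Let `q = 11^n` and `F = F_q`. The polynomial
`f_n(x) = ∑_{i=1}^{q-2} [4^{i+1}(2-i) - 6^i] x^i` satisfies
`f_n ≡ ((2-x)^{q-2} + 1)^{q-2} - 8 (mod x^q - x)`; it is a permutation polynomial of `F_q`
of Carlitz rank 2, and its weight is `11^n - 11^{n-1} - 4`. -/
theorem example_eleven (n : ℕ) (hn : 0 < n) (f : Polynomial (GaloisField 11 n))
    (hf : f = ∑ i ∈ Finset.Icc (1 : ℕ) (11 ^ n - 2),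
        C ((4 : GaloisField 11 n) ^ (i + 1) * (2 - (i : GaloisField 11 n)) - 6 ^ i) * X ^ i) :
    (X ^ 11 ^ n - X : Polynomial (GaloisField 11 n)) ∣
        f - (((C 2 - X) ^ (11 ^ n - 2) + 1) ^ (11 ^ n - 2) - C 8) ∧
      Function.Bijective (fun x : GaloisField 11 n => f.eval x) ∧
      carlitzRank (11 ^ n) f = 2 ∧
      polyWeight (11 ^ n) f = 11 ^ n - 11 ^ (n - 1) - 4 := by
  let := Fintype.ofFinite (GaloisField 11 n)
  have hq : Fintype.card (GaloisField 11 n) = 11 ^ n := by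
    rw [← Nat.card_eq_fintype_card, GaloisField.card 11 n hn.ne']
  obtain rfl : f = examplePoly _ := by rw [hf, examplePoly, hq]; rfl
  rw [← hq]
  refine ⟨X_pow_card_sub_X_dvd_examplePoly_sub, ?_, carlitzRank_examplePoly, ?_⟩
  · simpa only [eval_examplePoly] using Finite.injective_iff_bijective.1 exampleMap_injective
  · rw [polyWeight_examplePoly hn hq, hq]
end
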